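/- arXiv:math-ph/9901018 — 2 statements merged into one kernel-verified Lean document; each statement's English description precedes it below -/
import Mathlib

section
/- If I is a fixed bounded operator and ψ a fixed vector, then the expectation value I(τ, s) = ⟨ψ, U_τ(s)† I U_τ(s) ψ⟩ is an entire function of τ for each fixed s. -/
/-!
The solution of a linear equation `u' = c • A t (u t)`, `u 0 = x₀`, is its Dyson series
`∑ cⁿ • Dₙ(t)`, where `Dₙ` is the `n`-fold iterated Volterra integral of `A` applied to `x₀`: the
remainder after `N` terms satisfies the same Volterra recursion as the terms, so for `‖A‖ ≤ C`
both obey the Picard bound `M (‖c‖ C |t|)ⁿ / n!`. Hence `U_τ(s)` and `V_τ(s)` are power series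
in `τ` whose coefficients are bounded by `(C|s|)ⁿ / n!`, i.e. entire functions, and the
expectation value is a continuous bilinear expression in them. The same bound makes solutions
unique; for real `τ` the adjoint `U_τ(s)†` solves the equation defining `V_τ(s)`, so the two agree.
-/

open MeasureTheory Set Filter Topology Interval
open scoped Nat NNReal

section Dyson

variable {E : Type*} [NormedAddCommGroup E] [NormedSpace ℂ E]

noncomputable def dysonTerm (A : ℝ → E →L[ℂ] E) (x₀ : E) : ℕ → ℝ → E
  | 0 => fun _ => x₀
  | n + 1 => fun t => ∫ r in (0 : ℝ)..t, A r (dysonTerm A x₀ n r)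

theorem continuous_dysonTerm {A : ℝ → E →L[ℂ] E} (hA : Continuous A) (x₀ : E) :
    ∀ n, Continuous (dysonTerm A x₀ n)
  | 0 => continuous_const
  | n + 1 => intervalIntegral.continuous_primitive
      (fun _ _ => (hA.clm_apply (continuous_dysonTerm hA x₀ n)).intervalIntegrable _ _) 0

theorem norm_le_of_volterra_iterate {B : ℝ → E →L[ℂ] E} {K M s : ℝ} (hB : ∀ r, ‖B r‖ ≤ K)
    {G : ℕ → ℝ → E} (hG : ∀ n t, G (n + 1) t = ∫ r in (0 : ℝ)..t, B r (G n r))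
    (h0 : ∀ t ∈ uIcc 0 s, ‖G 0 t‖ ≤ M) (n : ℕ) :
    ∀ t ∈ uIcc 0 s, ‖G n t‖ ≤ M * (K * |t|) ^ n / n ! := by
  have hK : 0 ≤ K := (norm_nonneg _).trans (hB 0)
  induction n with
  | zero => simpa using h0
  | succ n ih =>
    intro t ht
    have hpointwise : ∀ r ∈ Ι 0 t, ‖B r (G n r)‖ ≤ M * K ^ (n + 1) / n ! * |r| ^ n := by
      intro r hr
      have hr' : r ∈ uIcc 0 s := uIcc_subset_uIcc left_mem_uIcc ht (uIoc_subset_uIcc hr)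
      calc ‖B r (G n r)‖ ≤ K * ‖G n r‖ := (B r).le_of_opNorm_le (hB r) _
        _ ≤ K * (M * (K * |r|) ^ n / n !) := by gcongr; exact ih r hr'
        _ = M * K ^ (n + 1) / n ! * |r| ^ n := by ring
    have hpow : ∫ r in Ι 0 t, |r| ^ n = |t| ^ (n + 1) / (n + 1) := by
      simpa using integral_pow_abs_sub_uIoc (a := 0) (b := t) (n := n)
    rw [hG, intervalIntegral.norm_intervalIntegral_eq]
    calc ‖∫ r in Ι 0 t, B r (G n r)‖ ≤ ∫ r in Ι 0 t, M * K ^ (n + 1) / n ! * |r| ^ n :=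
          norm_integral_le_of_norm_le (Continuous.integrableOn_uIoc (by fun_prop))
            (ae_restrict_of_forall_mem measurableSet_uIoc hpointwise)
      _ = M * (K * |t|) ^ (n + 1) / (n + 1) ! := by
        rw [integral_const_mul, hpow, Nat.factorial_succ]
        push_cast
        field_simp
        ring

variable {A : ℝ → E →L[ℂ] E} {x₀ : E}

theorem norm_dysonTerm_le {C : ℝ} (hA : ∀ r, ‖A r‖ ≤ C) (n : ℕ) (t : ℝ) :
    ‖dysonTerm A x₀ n t‖ ≤ ‖x₀‖ * (C * |t|) ^ n / n ! :=
  norm_le_of_volterra_iterate (s := t) hA (fun _ _ => rfl) (fun _ _ => le_rfl) n t right_mem_uIcc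

theorem summable_norm_smul_dysonTerm {C : ℝ} (hA : ∀ r, ‖A r‖ ≤ C) (c : ℂ) (t : ℝ) :
    Summable fun n => ‖c ^ n • dysonTerm A x₀ n t‖ := by
  refine .of_nonneg_of_le (fun _ => norm_nonneg _) (fun n => ?_)
    ((Real.summable_pow_div_factorial (‖c‖ * (C * |t|))).mul_left ‖x₀‖)
  calc ‖c ^ n • dysonTerm A x₀ n t‖ ≤ ‖c‖ ^ n * (‖x₀‖ * (C * |t|) ^ n / n !) := by
        rw [norm_smul, norm_pow]; gcongr; exact norm_dysonTerm_le hA n t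
    _ = ‖x₀‖ * ((‖c‖ * (C * |t|)) ^ n / n !) := by ring

variable [CompleteSpace E] {c : ℂ} {u : ℝ → E}

theorem sub_sum_dysonTerm_succ (hA : Continuous A) (hu : ∀ t, HasDerivAt u (c • A t (u t)) t)
    (hu0 : u 0 = x₀) (N : ℕ) (t : ℝ) :
    u t - ∑ n ∈ Finset.range (N + 1), c ^ n • dysonTerm A x₀ n t =
      ∫ r in (0 : ℝ)..t, (c • A r) (u r - ∑ n ∈ Finset.range N, c ^ n • dysonTerm A x₀ n r) := by
  have hAu : Continuous fun r => A r (u r) :=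
    hA.clm_apply (continuous_iff_continuousAt.2 fun t => (hu t).continuousAt)
  have hAD : ∀ n, Continuous fun r => A r (dysonTerm A x₀ n r) :=
    fun n => hA.clm_apply (continuous_dysonTerm hA x₀ n)
  have hFTC : ∫ r in (0 : ℝ)..t, c • A r (u r) = u t - x₀ := by
    rw [← hu0]
    exact intervalIntegral.integral_eq_sub_of_hasDerivAt (fun r _ => hu r)
      ((hAu.const_smul c).intervalIntegrable _ _)
  have hint : ∀ n,
      IntervalIntegrable (fun r => c ^ (n + 1) • A r (dysonTerm A x₀ n r)) volume 0 t :=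
    fun n => ((hAD n).const_smul _).intervalIntegrable _ _
  have hint_sum : IntervalIntegrable
      (fun r => ∑ n ∈ Finset.range N, c ^ (n + 1) • A r (dysonTerm A x₀ n r)) volume 0 t :=
    ((continuous_finsetSum _ fun n _ => (hAD n).const_smul _).intervalIntegrable _ _)
  simp only [smul_apply, map_sub, map_sum, map_smul, smul_smul, ← pow_succ]
  rw [intervalIntegral.integral_sub (f := fun r => c • A r (u r))
      ((hAu.const_smul c).intervalIntegrable _ _) hint_sum,
    intervalIntegral.integral_finsetSum fun n _ => hint n, hFTC, Finset.sum_range_succ']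
  simp only [intervalIntegral.integral_smul, dysonTerm, pow_zero, one_smul]
  abel

theorem hasSum_dysonTerm (hA : Continuous A) {C : ℝ} (hAC : ∀ r, ‖A r‖ ≤ C)
    (hu : ∀ t, HasDerivAt u (c • A t (u t)) t) (hu0 : u 0 = x₀) (s : ℝ) :
    HasSum (fun n => c ^ n • dysonTerm A x₀ n s) (u s) := by
  refine (summable_norm_smul_dysonTerm hAC c s).of_norm.hasSum_iff_tendsto_nat.2 ?_
  obtain ⟨M, hM⟩ := (isCompact_uIcc (a := (0 : ℝ)) (b := s)).exists_bound_of_continuousOn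
    (continuous_iff_continuousAt.2 fun t => (hu t).continuousAt).continuousOn
  have hremainder : ∀ N, ‖u s - ∑ n ∈ Finset.range N, c ^ n • dysonTerm A x₀ n s‖ ≤
      M * (‖c‖ * C * |s|) ^ N / N ! := fun N =>
    norm_le_of_volterra_iterate
      (G := fun N t => u t - ∑ n ∈ Finset.range N, c ^ n • dysonTerm A x₀ n t)
      (fun r => (norm_smul_le c (A r)).trans (by gcongr; exact hAC r))
      (sub_sum_dysonTerm_succ hA hu hu0) (by simpa using hM) N s right_mem_uIcc
  have hlim : Tendsto (fun N => M * (‖c‖ * C * |s|) ^ N / N !) atTop (𝓝 0) := by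
    simpa [mul_div_assoc] using
      (FloorSemiring.tendsto_pow_div_factorial_atTop (‖c‖ * C * |s|)).const_mul M
  simpa using (squeeze_zero_norm hremainder hlim).const_sub (u s)

theorem analyticAt_tsum_pow_smul {a : ℕ → E} (ha : ∀ r : ℝ≥0, Summable fun n => ‖a n‖ * r ^ n)
    (z : ℂ) : AnalyticAt ℂ (fun τ => ∑' n, τ ^ n • a n) z := by
  let p : FormalMultilinearSeries ℂ ℂ E := fun n =>
    ContinuousMultilinearMap.mkPiRing ℂ (Fin n) (a n)
  have hp : p.radius = ⊤ := p.radius_eq_top_of_summable_norm fun r => by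
    simpa [p, ContinuousMultilinearMap.norm_mkPiRing] using ha r
  have hsum : (fun τ : ℂ => ∑' n, τ ^ n • a n) = p.sum := by
    funext τ
    simp [p, FormalMultilinearSeries.sum]
  rw [hsum]
  exact (p.hasFPowerSeriesOnBall (hp ▸ ENNReal.zero_lt_top)).analyticAt_of_mem
    (hp ▸ edist_lt_top z 0)

theorem analyticAt_linearODE_solution (hA : Continuous A) {C : ℝ}
    (hAC : ∀ r, ‖A r‖ ≤ C) (k : ℂ) {w : ℂ → ℝ → E}
    (hw : ∀ τ t, HasDerivAt (w τ) ((k * τ) • A t (w τ t)) t) (hw0 : ∀ τ, w τ 0 = x₀) (s : ℝ)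
    (τ₀ : ℂ) : AnalyticAt ℂ (fun τ => w τ s) τ₀ := by
  have hseries : (fun τ => w τ s) = fun τ => ∑' n, τ ^ n • (k ^ n • dysonTerm A x₀ n s) := by
    funext τ
    simp only [smul_smul, ← mul_pow, mul_comm τ k]
    exact (hasSum_dysonTerm hA hAC (hw τ) (hw0 τ) s).tsum_eq.symm
  rw [hseries]
  refine analyticAt_tsum_pow_smul (fun r => ?_) τ₀
  simpa [norm_smul, mul_pow, mul_comm, mul_left_comm, mul_assoc] using
    summable_norm_smul_dysonTerm (x₀ := x₀) hAC (k * r) s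

theorem linearODE_solution_unique (hA : Continuous A) {C : ℝ} (hAC : ∀ r, ‖A r‖ ≤ C) {v : ℝ → E}
    (hu : ∀ t, HasDerivAt u (c • A t (u t)) t) (hv : ∀ t, HasDerivAt v (c • A t (v t)) t)
    (h0 : u 0 = v 0) (s : ℝ) : u s = v s :=
  (hasSum_dysonTerm hA hAC hu h0 s).unique (hasSum_dysonTerm hA hAC hv rfl s)

end Dyson

open ContinuousLinearMap Complex in
/-- If `I` is a fixed bounded operator and `ψ` a fixed vector, then
the expectation value `I(τ,s) = ⟨ψ, U_τ(s)† I U_τ(s) ψ⟩` is an entire function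
of `τ` for each fixed `s`.  Here `V_τ(s)` denotes the entire extension of the
adjoint `U_τ(s)†` (solving `i ∂_s V = -τ V H`, `V_τ(0) = 1`), so that for real
`τ` the function below coincides with `⟨ψ, U_τ(s)† I U_τ(s) ψ⟩`. -/
theorem expectation_value_entire
    {𝓗 : Type*} [NormedAddCommGroup 𝓗] [InnerProductSpace ℂ 𝓗] [CompleteSpace 𝓗]
    (H : ℝ → (𝓗 →L[ℂ] 𝓗))
    (hHcont : Continuous H)
    (hHsa : ∀ s, IsSelfAdjoint (H s))
    (C : ℝ) (hHbdd : ∀ s, ‖H s‖ ≤ C)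
    (U V : ℂ → ℝ → (𝓗 →L[ℂ] 𝓗))
    (hU0 : ∀ τ : ℂ, U τ 0 = 1)
    (hUode : ∀ (τ : ℂ) (s : ℝ),
      HasDerivAt (fun s' => U τ s') ((-Complex.I * τ) • ((H s).comp (U τ s))) s)
    (hV0 : ∀ τ : ℂ, V τ 0 = 1)
    (hVode : ∀ (τ : ℂ) (s : ℝ),
      HasDerivAt (fun s' => V τ s') ((Complex.I * τ) • ((V τ s).comp (H s))) s)
    (Iop : 𝓗 →L[ℂ] 𝓗) (ψ : 𝓗) (s : ℝ) :
    (∀ τ₀ : ℂ, AnalyticAt ℂ (fun τ : ℂ => (inner ℂ ψ ((V τ s) (Iop ((U τ s) ψ))) : ℂ)) τ₀) ∧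
    (∀ τ : ℝ, (inner ℂ ψ ((V (τ : ℂ) s) (Iop ((U (τ : ℂ) s) ψ))) : ℂ)
        = (inner ℂ ((U (τ : ℂ) s) ψ) (Iop ((U (τ : ℂ) s) ψ)) : ℂ)) := by
  have hC : 0 ≤ C := (norm_nonneg _).trans (hHbdd 0)
  let AU : ℝ → (𝓗 →L[ℂ] 𝓗) →L[ℂ] 𝓗 →L[ℂ] 𝓗 := fun r => compL ℂ 𝓗 𝓗 𝓗 (H r)
  let AV : ℝ → (𝓗 →L[ℂ] 𝓗) →L[ℂ] 𝓗 →L[ℂ] 𝓗 := fun r => (compL ℂ 𝓗 𝓗 𝓗).flip (H r)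
  have hAU : Continuous AU := (compL ℂ 𝓗 𝓗 𝓗).continuous.comp hHcont
  have hAV : Continuous AV := (compL ℂ 𝓗 𝓗 𝓗).flip.continuous.comp hHcont
  have hAUC : ∀ r, ‖AU r‖ ≤ C := fun r => opNorm_le_bound _ hC fun X =>
    (opNorm_comp_le _ _).trans (by gcongr; exact hHbdd r)
  have hAVC : ∀ r, ‖AV r‖ ≤ C := fun r => opNorm_le_bound _ hC fun X =>
    (opNorm_comp_le _ _).trans (by rw [mul_comm]; gcongr; exact hHbdd r)
  have hU : ∀ τ₀, AnalyticAt ℂ (fun τ => U τ s) τ₀ :=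
    analyticAt_linearODE_solution hAU hAUC (-I) hUode hU0 s
  have hV : ∀ τ₀, AnalyticAt ℂ (fun τ => V τ s) τ₀ :=
    analyticAt_linearODE_solution hAV hAVC I hVode hV0 s
  refine ⟨fun τ₀ => ?_, fun τ => ?_⟩
  · have hprod : AnalyticAt ℂ (fun τ => V τ s * Iop * U τ s) τ₀ :=
      ((hV τ₀).mul analyticAt_const).mul (hU τ₀)
    exact (((innerSL ℂ ψ).comp (apply ℂ 𝓗 ψ)).analyticAt _).comp hprod
  · have hUstar : ∀ t, HasDerivAt (fun t => star (U τ t)) ((I * τ) • AV t (star (U τ t))) t := by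
      intro t
      refine (hUode τ t).star.congr_deriv ?_
      change star ((-I * τ) • (H t).comp (U τ t)) = (I * τ) • (star (U τ t)).comp (H t)
      rw [star_eq_adjoint, star_eq_adjoint, map_smulₛₗ, adjoint_comp, ← star_eq_adjoint (H t),
        (hHsa t).star_eq]
      congr 1
      simp
    have hVU : V τ s = star (U τ s) :=
      linearODE_solution_unique hAV hAVC (hVode τ) hUstar (by simp [hU0, hV0]) s
    rw [hVU, star_eq_adjoint, adjoint_inner_right]
end

section
/- Every quasienergy E of a Floquet operator F_τ(0,k) generated over one period [0, 2π] by a bounded Hamiltonian satisfies the bound that it can be chosen with |E| ≤ 2πτ · max_{s,k} ‖H(s,k)‖; consequently, if τ max‖H‖ < 1/2 (equivalently the driving field ε > 2 max‖H‖ in units ℏ = e = 1), all quasienergy branches have zero winding number, hence all Chern numbers/transported charges Q vanish. -/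
open scoped Real

open Complex Filter Topology Set

/-!
Subdivide `[0, t]` into `n` steps. Across one step a unitary path of speed `L` moves by at most
`L t / n`; since unitaries are normal, each spectral point then lies within `L t / n` of a
spectral point of the previous step, i.e. at angular distance at most `L t / n + (L t / n) ^ 3`.
Starting from `σ (u 0) = {1}`, the spectrum of `u t` stays in the arc
`|arg| ≤ L t + (L t) ^ 3 / n ^ 2`; letting `n → ∞` gives `|arg| ≤ L t`, i.e. `|E| ≤ 2πτC` for the
Floquet operator. When `2πτC < π`, a continuous quasienergy branch never meets the odd multiples
of `π`, so by the intermediate value theorem it cannot change by a nonzero multiple of `2π`.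
-/

namespace Complex

lemma exp_arg_mul_I_of_norm_eq_one {z : ℂ} (hz : ‖z‖ = 1) : exp (arg z * I) = z := by
  simpa [hz] using norm_mul_exp_arg_mul_I z

lemma norm_coe_angle_arg (z : ℂ) : ‖(arg z : Real.Angle)‖ = |arg z| :=
  (AddCircle.norm_coe_eq_abs_iff _ Real.two_pi_pos.ne').2 <| by
    rw [abs_of_pos Real.two_pi_pos, mul_div_cancel_left₀ _ two_ne_zero]
    exact abs_arg_le_pi z

lemma abs_arg_le_norm_sub_one_add_pow_three {ζ : ℂ} (hζ : ‖ζ‖ = 1) :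
    |arg ζ| ≤ ‖ζ - 1‖ + ‖ζ - 1‖ ^ 3 := by
  set x := |arg ζ|
  set ε := ‖ζ - 1‖
  have hx0 : 0 ≤ x := abs_nonneg _
  have hxπ : x ≤ π := abs_arg_le_pi ζ
  have hchord : 2 * Real.sin (x / 2) ≤ ε := by
    have hε : ε = 2 * |Real.sin (arg ζ / 2)| := by
      calc ε = ‖exp (I * arg ζ) - 1‖ := by rw [mul_comm, exp_arg_mul_I_of_norm_eq_one hζ]
        _ = 2 * |Real.sin (arg ζ / 2)| := by
          rw [norm_exp_I_mul_ofReal_sub_one, norm_mul, Real.norm_two, Real.norm_eq_abs]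
    rw [hε, show x / 2 = |arg ζ / 2| by rw [abs_div, abs_two]]
    gcongr
    rcases abs_choice (arg ζ / 2) with h | h <;> rw [h]
    · exact le_abs_self _
    · rw [Real.sin_neg]
      exact neg_le_abs _
  have hjordan : 2 / π * (x / 2) ≤ Real.sin (x / 2) := Real.mul_le_sin (by positivity) (by linarith)
  have hcube : x / 2 - (x / 2) ^ 3 / 6 ≤ Real.sin (x / 2) := Real.sin_ge_sub_cube (by positivity)
  have hx2ε : x ≤ 2 * ε := by
    have : x / π ≤ ε / 2 := by linarith [show 2 / π * (x / 2) = x / π by ring]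
    rw [div_le_iff₀ Real.pi_pos] at this
    nlinarith [Real.pi_le_four, norm_nonneg (ζ - 1)]
  have hx3 : x ^ 3 ≤ 8 * ε ^ 3 := by
    calc x ^ 3 ≤ (2 * ε) ^ 3 := pow_le_pow_left₀ hx0 hx2ε 3
      _ = 8 * ε ^ 3 := by ring
  nlinarith [pow_nonneg (norm_nonneg (ζ - 1)) 3]

lemma abs_arg_le_abs_arg_add {z w : ℂ} (hz : ‖z‖ = 1) (hw : ‖w‖ = 1) :
    |arg z| ≤ |arg w| + (‖z - w‖ + ‖z - w‖ ^ 3) := by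
  have hw0 : w ≠ 0 := norm_ne_zero_iff.mp (by rw [hw]; exact one_ne_zero)
  have hζ : ‖z / w‖ = 1 := by rw [norm_div, hz, hw, div_one]
  have hζ0 : z / w ≠ 0 := norm_ne_zero_iff.mp (by rw [hζ]; exact one_ne_zero)
  have hζ1 : ‖z / w - 1‖ = ‖z - w‖ := by rw [div_sub_one hw0, norm_div, hw, div_one]
  have hsplit : (arg z : Real.Angle) = arg w + arg (z / w) := by
    rw [← arg_mul_coe_angle hw0 hζ0, mul_div_cancel₀ _ hw0]
  calc |arg z| = ‖(arg z : Real.Angle)‖ := (norm_coe_angle_arg z).symm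
    _ ≤ ‖(arg w : Real.Angle)‖ + ‖(arg (z / w) : Real.Angle)‖ := hsplit ▸ norm_add_le _ _
    _ = |arg w| + |arg (z / w)| := by rw [norm_coe_angle_arg, norm_coe_angle_arg]
    _ ≤ |arg w| + (‖z - w‖ + ‖z - w‖ ^ 3) := by
      rw [← hζ1]
      exact add_le_add_right (abs_arg_le_norm_sub_one_add_pow_three hζ) _

end Complex

lemma spectrum.nontrivial_of_mem {R A : Type*} [CommSemiring R] [Ring A] [Algebra R A] {a : A}
    {r : R} (hr : r ∈ spectrum R a) : Nontrivial A := by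
  by_contra hA
  rw [not_nontrivial_iff_subsingleton] at hA
  simp at hr

section CStarAlgebra

variable {A : Type*} [CStarAlgebra A]

lemma spectrum.exists_norm_sub_le_of_isStarNormal {a b : A} [IsStarNormal b] {z : ℂ}
    (hz : z ∈ spectrum ℂ a) : ∃ w ∈ spectrum ℂ b, ‖z - w‖ ≤ ‖a - b‖ := by
  have := spectrum.nontrivial_of_mem hz
  obtain ⟨w, hw, hmin⟩ := (spectrum.isCompact b).exists_isMinOn (spectrum.nonempty b)
    (continuous_const.sub continuous_id).norm.continuousOn
  refine ⟨w, hw, le_of_not_gt fun hlt => (spectrum.mem_iff.mp hz) ?_⟩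
  have hmin' : ∀ x ∈ spectrum ℂ b, ‖z - w‖ ≤ ‖z - x‖ := fun x hx => isMinOn_iff.mp hmin x hx
  have hpos : 0 < ‖z - w‖ := (norm_nonneg _).trans_lt hlt
  have hne : ∀ x ∈ spectrum ℂ b, z - x ≠ 0 := fun x hx h =>
    hpos.not_ge ((hmin' x hx).trans_eq (by rw [h, norm_zero]))
  -- normality of `b`: its resolvent at `z` has norm at most `1 / dist (z, σ b)`
  set r := cfcUnits (fun x => z - x) b hne
  have hr : (r : A) = algebraMap ℂ A z - b := by
    simp [r, cfc_sub (fun _ : ℂ => z) (fun x : ℂ => x) b, cfc_const z b, cfc_id' ℂ b]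
  have hr_inv : ‖(↑r⁻¹ : A)‖ ≤ ‖z - w‖⁻¹ :=
    norm_cfc_le (inv_nonneg.mpr hpos.le) fun x hx => by
      rw [norm_inv]
      exact inv_anti₀ hpos (hmin' x hx)
  have hnear : ‖algebraMap ℂ A z - a - r‖ < ‖(↑r⁻¹ : A)‖⁻¹ := by
    rw [hr, sub_sub_sub_cancel_left, norm_sub_rev]
    exact hlt.trans_le (le_inv_of_le_inv₀ (Units.norm_pos r⁻¹) hr_inv)
  exact (r.ofNearby _ hnear).isUnit

variable {u : ℝ → A} {L : ℝ}

lemma abs_arg_le_of_mem_spectrum_natCast_mul (hu : ∀ t, u t ∈ unitary A) (h0 : u 0 = 1)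
    (hL : ∀ s t, ‖u t - u s‖ ≤ L * |t - s|) {h : ℝ} (hh : 0 ≤ h) (j : ℕ) {μ : ℂ}
    (hμ : μ ∈ spectrum ℂ (u (j * h))) : |arg μ| ≤ j * (L * h + (L * h) ^ 3) := by
  induction j generalizing μ with
  | zero =>
    have := spectrum.nontrivial_of_mem hμ
    rw [Nat.cast_zero, zero_mul, h0, spectrum.one_eq, mem_singleton_iff] at hμ
    simp [hμ]
  | succ j ih =>
    have := isStarNormal_of_mem_unitary (hu (j * h))
    obtain ⟨w, hw, hμw⟩ := spectrum.exists_norm_sub_le_of_isStarNormal (b := u (j * h)) hμ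
    have hstep : ‖μ - w‖ ≤ L * h := by
      refine hμw.trans ((hL _ _).trans_eq ?_)
      rw [Nat.cast_succ, add_one_mul, add_sub_cancel_left, abs_of_nonneg hh]
    calc |arg μ| ≤ |arg w| + (‖μ - w‖ + ‖μ - w‖ ^ 3) :=
          abs_arg_le_abs_arg_add (spectrum.norm_eq_one_of_unitary (hu _) hμ)
            (spectrum.norm_eq_one_of_unitary (hu _) hw)
      _ ≤ j * (L * h + (L * h) ^ 3) + (L * h + (L * h) ^ 3) := by
          gcongr
          exact ih hw
      _ = (j + 1 : ℕ) * (L * h + (L * h) ^ 3) := by push_cast; ring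

theorem abs_arg_le_mul_of_mem_spectrum (hu : ∀ t, u t ∈ unitary A) (h0 : u 0 = 1)
    (hL : ∀ s t, ‖u t - u s‖ ≤ L * |t - s|) {t : ℝ} (ht : 0 ≤ t) {μ : ℂ}
    (hμ : μ ∈ spectrum ℂ (u t)) : |arg μ| ≤ L * t := by
  have hbound : ∀ n : ℕ, n ≠ 0 → |arg μ| ≤ L * t + (L * t) ^ 3 * ((n : ℝ)⁻¹) ^ 2 := by
    intro n hn
    have hn' : (n : ℝ) ≠ 0 := Nat.cast_ne_zero.mpr hn
    convert abs_arg_le_of_mem_spectrum_natCast_mul hu h0 hL (h := t / n) (by positivity) n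
      (by rwa [mul_div_cancel₀ _ hn']) using 1
    field_simp
  have hlim : Tendsto (fun n : ℕ => L * t + (L * t) ^ 3 * ((n : ℝ)⁻¹) ^ 2) atTop (𝓝 (L * t)) := by
    simpa using tendsto_const_nhds.add
      (tendsto_const_nhds.mul ((tendsto_inv_atTop_nhds_zero_nat (𝕜 := ℝ)).pow 2))
  exact ge_of_tendsto hlim ((eventually_ne_atTop 0).mono hbound)

lemma norm_sub_le_of_hasDerivAt_neg_I_mul_smul_mul {U H : ℝ → A} {τ C : ℝ} (hτ : 0 ≤ τ)
    (hH : ∀ s, ‖H s‖ ≤ C) (hU : ∀ s, U s ∈ unitary A)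
    (hderiv : ∀ s, HasDerivAt U ((-I * τ) • (H s * U s)) s) (s t : ℝ) :
    ‖U t - U s‖ ≤ τ * C * |t - s| := by
  have hbound : ∀ x ∈ univ, ‖(-I * τ) • (H x * U x)‖ ≤ τ * C := fun x _ => by
    rw [norm_smul, CStarRing.norm_mul_mem_unitary _ (hU x), norm_mul, norm_neg, norm_I, one_mul,
      norm_real, Real.norm_of_nonneg hτ]
    exact mul_le_mul_of_nonneg_left (hH x) hτ
  simpa [Real.norm_eq_abs] using convex_univ.norm_image_sub_le_of_norm_hasDerivWithin_le
    (fun x _ => (hderiv x).hasDerivWithinAt) hbound (mem_univ s) (mem_univ t)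

end CStarAlgebra

lemma Real.pi_le_abs_odd_mul_pi_sub (i j : ℤ) : π ≤ |π * (2 * i + 1) - 2 * π * j| := by
  have hodd : (1 : ℝ) ≤ |((2 * (i - j) + 1 : ℤ) : ℝ)| := by
    exact_mod_cast Int.one_le_abs (by omega)
  calc π = π * 1 := (mul_one π).symm
    _ ≤ |π| * |((2 * (i - j) + 1 : ℤ) : ℝ)| := by rw [abs_of_pos Real.pi_pos]; gcongr
    _ = |π * (2 * i + 1) - 2 * π * j| := by rw [← abs_mul]; push_cast; ring_nf

theorem eq_of_sub_eq_two_pi_mul_of_abs_sub_le {E : ℝ → ℝ} (hE : Continuous E) {a : ℝ}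
    (ha : a < π) (hband : ∀ k, ∃ j : ℤ, |E k - 2 * π * j| ≤ a) {x y : ℝ} {m : ℤ}
    (hm : E y - E x = 2 * π * m) : E y = E x := by
  by_contra hne
  have hm0 : m ≠ 0 := by
    rintro rfl
    exact hne (sub_eq_zero.mp (by simpa using hm))
  obtain ⟨n, hn⟩ := hband x
  rw [abs_le] at hn
  have hπ := Real.pi_pos
  -- `E` runs from `E x ∈ [2πn - a, 2πn + a]` to `E x + 2πm`, passing `π (2n ± 1)`
  have hcross : ∃ i : ℤ, π * (2 * i + 1) ∈ uIcc (E x) (E y) := by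
    rcases lt_or_gt_of_ne hm0 with hneg | hpos
    · have hm1 : (m : ℝ) ≤ -1 := by exact_mod_cast Int.le_sub_one_of_lt hneg
      refine ⟨n - 1, mem_uIcc.mpr (Or.inr ⟨?_, ?_⟩)⟩ <;> push_cast <;> nlinarith
    · have hm1 : (1 : ℝ) ≤ m := by exact_mod_cast hpos
      refine ⟨n, mem_uIcc.mpr (Or.inl ⟨?_, ?_⟩)⟩ <;> nlinarith
  obtain ⟨i, hi⟩ := hcross
  obtain ⟨k, -, hk⟩ := intermediate_value_uIcc hE.continuousOn hi
  obtain ⟨j, hj⟩ := hband k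
  have := Real.pi_le_abs_odd_mul_pi_sub i j
  rw [← hk] at this
  linarith

theorem quasienergy_bound_and_zero_winding_general
    {𝓗 : Type*} [NormedAddCommGroup 𝓗] [InnerProductSpace ℂ 𝓗] [CompleteSpace 𝓗]
    (τ C : ℝ) (hτ : 0 < τ)
    (H : ℝ → ℝ → (𝓗 →L[ℂ] 𝓗))
    (hHbdd : ∀ k s, ‖H k s‖ ≤ C)
    (U : ℝ → ℝ → (𝓗 →L[ℂ] 𝓗))
    (hU0 : ∀ k, U k 0 = 1)
    (hUode : ∀ k s,
      HasDerivAt (fun s' => U k s') ((-Complex.I * (τ : ℂ)) • ((H k s).comp (U k s))) s)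
    (hUunit : ∀ k s, U k s ∈ unitary (𝓗 →L[ℂ] 𝓗)) :
    (∀ k : ℝ, ∀ μ ∈ spectrum ℂ (U k (2 * π)),
      ∃ E : ℝ, μ = Complex.exp (Complex.I * E) ∧ |E| ≤ 2 * π * τ * C) ∧
    (τ * C < 1 / 2 →
      ∀ E : ℝ → ℝ, Continuous E →
        (∀ k : ℝ, Complex.exp (Complex.I * E k) ∈ spectrum ℂ (U k (2 * π))) →
        (∃ m : ℤ, E (2 * π) - E 0 = 2 * π * m) →
        E (2 * π) = E 0) := by
  have hspec : ∀ k, ∀ μ ∈ spectrum ℂ (U k (2 * π)), |arg μ| ≤ 2 * π * τ * C := by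
    intro k μ hμ
    have hLip := norm_sub_le_of_hasDerivAt_neg_I_mul_smul_mul hτ.le (hHbdd k) (hUunit k) (hUode k)
    have := abs_arg_le_mul_of_mem_spectrum (hUunit k) (hU0 k) hLip Real.two_pi_pos.le hμ
    linarith
  refine ⟨fun k μ hμ => ⟨arg μ, ?_, hspec k μ hμ⟩, fun hsmall E hE hmem ⟨m, hm⟩ => ?_⟩
  · rw [mul_comm, exp_arg_mul_I_of_norm_eq_one (spectrum.norm_eq_one_of_unitary (hUunit k _) hμ)]
  · refine eq_of_sub_eq_two_pi_mul_of_abs_sub_le hE (a := 2 * π * τ * C)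
      (by nlinarith [Real.pi_pos]) (fun k => ⟨toIocDiv Real.two_pi_pos (-π) (E k), ?_⟩) hm
    have := hspec k _ (hmem k)
    rwa [mul_comm, arg_exp_mul_I, toIocMod, zsmul_eq_mul, mul_comm] at this

/-- Every quasienergy of the Floquet operator
`F_τ(0, k) = U_τ(2π, k)` generated over one period by a bounded Hamiltonian
(`‖H(s, k)‖ ≤ C`) can be chosen with `|E| ≤ 2πτC`; consequently, if
`τ C < 1/2` then every continuous quasienergy branch that closes up after a
period has zero winding number, `E(2π) = E(0)`. -/
theorem quasienergy_bound_and_zero_winding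
    {𝓗 : Type*} [NormedAddCommGroup 𝓗] [InnerProductSpace ℂ 𝓗] [CompleteSpace 𝓗]
    (τ C : ℝ) (hτ : 0 < τ) (hC : 0 ≤ C)
    (H : ℝ → ℝ → (𝓗 →L[ℂ] 𝓗))
    (hHcont : Continuous fun q : ℝ × ℝ => H q.1 q.2)
    (hHsa : ∀ k s, IsSelfAdjoint (H k s))
    (hHbdd : ∀ k s, ‖H k s‖ ≤ C)
    (hHper : ∀ k s, H k (s + 2 * π) = H k s)
    (U : ℝ → ℝ → (𝓗 →L[ℂ] 𝓗))
    (hU0 : ∀ k, U k 0 = 1)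
    (hUode : ∀ k s,
      HasDerivAt (fun s' => U k s') ((-Complex.I * (τ : ℂ)) • ((H k s).comp (U k s))) s)
    (hUunit : ∀ k s, U k s ∈ unitary (𝓗 →L[ℂ] 𝓗)) :
    (∀ k : ℝ, ∀ μ ∈ spectrum ℂ (U k (2 * π)),
      ∃ E : ℝ, μ = Complex.exp (Complex.I * E) ∧ |E| ≤ 2 * π * τ * C) ∧
    (τ * C < 1 / 2 →
      ∀ E : ℝ → ℝ, Continuous E →
        (∀ k : ℝ, Complex.exp (Complex.I * E k) ∈ spectrum ℂ (U k (2 * π))) →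
        (∃ m : ℤ, E (2 * π) - E 0 = 2 * π * m) →
        E (2 * π) = E 0) :=
  quasienergy_bound_and_zero_winding_general τ C hτ H hHbdd U hU0 hUode hUunit
end
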